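/- arXiv:1412.3448 — 6 statements merged into one kernel-verified Lean document; each statement's English description precedes it below -/
import Mathlib

section
/- Let E be an n×n complex Hermitian positive definite matrix. For every n×n complex Hermitian positive definite matrix W, log det(W) − Re(Tr(W·E)) + n ≤ −log det(E) (where det(W) and det(E) are real and positive), and equality holds for W = E⁻¹. Consequently, −log det(E) = sup over Hermitian positive definite W of (log det(W) − Re(Tr(W·E)) + n), and the supremum is attained at W⋆ = E⁻¹. -/
/-!
Write `E = Sᴴ S` with `S` invertible. For positive definite `W`, the matrix `M = S W Sᴴ` is
positive definite with `det M = det W · det E` and `tr M = tr (W E)`, so the inequality is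
`log det M ≤ tr M - n`, which is `log λ ≤ λ - 1` summed over the eigenvalues `λ` of `M`.
At `W = E⁻¹` we have `M = 1` and equality.
-/

open Matrix ComplexOrder

namespace Matrix

variable {𝕜 n : Type*} [RCLike 𝕜] [Fintype n] [DecidableEq n] {A B : Matrix n n 𝕜}

lemma IsHermitian.re_det_eq_prod_eigenvalues (hA : A.IsHermitian) :
    RCLike.re A.det = ∏ i, hA.eigenvalues i := by
  rw [hA.det_eq_prod_eigenvalues, ← RCLike.ofReal_prod, RCLike.ofReal_re]

lemma IsHermitian.re_trace_eq_sum_eigenvalues (hA : A.IsHermitian) :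
    RCLike.re A.trace = ∑ i, hA.eigenvalues i := by
  rw [hA.trace_eq_sum_eigenvalues, ← RCLike.ofReal_sum, RCLike.ofReal_re]

namespace PosDef

lemma log_re_det_le_re_trace_sub_card (hA : A.PosDef) :
    Real.log (RCLike.re A.det) ≤ RCLike.re A.trace - Fintype.card n := by
  rw [hA.1.re_det_eq_prod_eigenvalues, hA.1.re_trace_eq_sum_eigenvalues,
    Real.log_prod fun i _ => (hA.eigenvalues_pos i).ne']
  calc ∑ i, Real.log (hA.1.eigenvalues i)
      ≤ ∑ i, (hA.1.eigenvalues i - 1) :=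
        Finset.sum_le_sum fun i _ => Real.log_le_sub_one_of_pos (hA.eigenvalues_pos i)
    _ = ∑ i, hA.1.eigenvalues i - Fintype.card n := by simp [Finset.sum_sub_distrib]

lemma re_det_mul (hA : A.PosDef) (B : Matrix n n 𝕜) :
    RCLike.re (A * B).det = RCLike.re A.det * RCLike.re B.det := by
  simp [RCLike.mul_re, (RCLike.pos_iff.mp hA.det_pos).2]

lemma log_re_det_mul (hA : A.PosDef) (hB : B.PosDef) :
    Real.log (RCLike.re (A * B).det) = Real.log (RCLike.re A.det) + Real.log (RCLike.re B.det) :=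
  (hA.re_det_mul B).symm ▸ Real.log_mul (RCLike.pos_iff.mp hA.det_pos).1.ne'
    (RCLike.pos_iff.mp hB.det_pos).1.ne'

lemma log_re_det_inv (hA : A.PosDef) :
    Real.log (RCLike.re A⁻¹.det) = -Real.log (RCLike.re A.det) := by
  have h := hA.inv.log_re_det_mul hA
  rw [nonsing_inv_mul A hA.det_pos.ne'.isUnit, det_one, RCLike.one_re, Real.log_one] at h
  linarith

open scoped MatrixOrder in
theorem log_re_det_add_log_re_det_le_re_trace_mul (hA : A.PosDef) (hB : B.PosDef) :
    Real.log (RCLike.re A.det) + Real.log (RCLike.re B.det) ≤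
      RCLike.re (A * B).trace - Fintype.card n := by
  obtain ⟨S, hS, rfl⟩ := CStarAlgebra.isStrictlyPositive_iff_eq_star_mul_self.mp
    hB.isStrictlyPositive
  have hM : (S * A * Sᴴ).PosDef := hA.mul_mul_conjTranspose_same (vecMul_injective_of_isUnit hS)
  have hdet : (S * A * Sᴴ).det = (A * (star S * S)).det := by
    simp only [det_mul, star_eq_conjTranspose]; ring
  have htrace : (S * A * Sᴴ).trace = (A * (star S * S)).trace := by
    rw [trace_mul_comm, ← mul_assoc, trace_mul_comm, star_eq_conjTranspose]
  rw [← hA.log_re_det_mul hB, ← hdet, ← htrace]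
  exact hM.log_re_det_le_re_trace_sub_card

end PosDef

end Matrix

/-- For an n×n Hermitian positive definite E, every Hermitian positive
definite W satisfies log det(W) − Re(Tr(W·E)) + n ≤ −log det(E), equality holds at
W = E⁻¹ (which is positive definite), and consequently −log det(E) is the supremum
(in fact the greatest value, attained at W⋆ = E⁻¹) of
W ↦ log det(W) − Re(Tr(W·E)) + n over Hermitian positive definite W. -/
theorem wmmse_logdet_variational {n : ℕ} (E : Matrix (Fin n) (Fin n) ℂ) (hE : E.PosDef) :
    (∀ W : Matrix (Fin n) (Fin n) ℂ, W.PosDef →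
      Real.log W.det.re - ((W * E).trace).re + n ≤ - Real.log E.det.re) ∧
    (E⁻¹).PosDef ∧
    (Real.log (E⁻¹).det.re - ((E⁻¹ * E).trace).re + n = - Real.log E.det.re) ∧
    IsGreatest {v : ℝ | ∃ W : Matrix (Fin n) (Fin n) ℂ, W.PosDef ∧
        v = Real.log W.det.re - ((W * E).trace).re + n}
      (- Real.log E.det.re) := by
  have bound : ∀ W : Matrix (Fin n) (Fin n) ℂ, W.PosDef →
      Real.log W.det.re - ((W * E).trace).re + n ≤ - Real.log E.det.re := by
    intro W hW
    have h : Real.log W.det.re + Real.log E.det.re ≤ (W * E).trace.re - Fintype.card (Fin n) :=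
      hW.log_re_det_add_log_re_det_le_re_trace_mul hE
    rw [Fintype.card_fin] at h
    linarith
  have attained : Real.log (E⁻¹).det.re - ((E⁻¹ * E).trace).re + n = - Real.log E.det.re := by
    rw [nonsing_inv_mul E hE.det_pos.ne'.isUnit, trace_one, Fintype.card_fin]
    simpa using hE.log_re_det_inv
  exact ⟨bound, hE.inv, attained, ⟨E⁻¹, hE.inv, attained.symm⟩, fun _ ⟨W, hW, hv⟩ => hv ▸ bound W hW⟩
end

section
/- Let H ∈ ℂ^{M×K}, let Σ_s ∈ ℂ^{K×K} and Σ_n ∈ ℂ^{M×M} be Hermitian positive definite, and let W ∈ ℂ^{K×K} be Hermitian positive definite. Define E(G) = (I_K − GᴴH)Σ_s(I_K − GᴴH)ᴴ + GᴴΣ_nG for G ∈ ℂ^{M×K}. Then G⋆ = (HΣ_sHᴴ + Σ_n)⁻¹HΣ_s satisfies Re(Tr(W·E(G⋆))) ≤ Re(Tr(W·E(G))) for every G ∈ ℂ^{M×K}; i.e., the generalized Wiener filter G⋆ globally minimizes G ↦ Re(Tr(W·E(G))). -/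
/-!
Completing the square: with `R = H Σ_s Hᴴ + Σ_n`, the filter `G⋆` solves the normal
equations `R G⋆ = H Σ_s`, so `E(G) = E(G⋆) + (G - G⋆)ᴴ R (G - G⋆)`. The last term is positive
semidefinite, and the trace of a product of two positive semidefinite matrices is nonnegative.
-/

open Matrix ComplexOrder

/-- The weighted-MSE matrix E(G) = (I − Gᴴ H) Σ_s (I − Gᴴ H)ᴴ + Gᴴ Σ_n G. -/
noncomputable def mseMatrix {M K : ℕ} (H : Matrix (Fin M) (Fin K) ℂ)
    (Ss : Matrix (Fin K) (Fin K) ℂ) (Sn : Matrix (Fin M) (Fin M) ℂ)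
    (G : Matrix (Fin M) (Fin K) ℂ) : Matrix (Fin K) (Fin K) ℂ :=
  (1 - Gᴴ * H) * Ss * (1 - Gᴴ * H)ᴴ + Gᴴ * Sn * G

open scoped MatrixOrder in
theorem Matrix.PosSemidef.trace_mul_nonneg {n 𝕜 : Type*} [Fintype n] [RCLike 𝕜]
    {A B : Matrix n n 𝕜} (hA : A.PosSemidef) (hB : B.PosSemidef) : 0 ≤ (A * B).trace := by
  classical
  obtain ⟨X, rfl⟩ := CStarAlgebra.nonneg_iff_eq_star_mul_self.mp hA.nonneg
  rw [star_eq_conjTranspose, Matrix.mul_assoc, trace_mul_comm]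
  exact (hB.mul_mul_conjTranspose_same X).trace_nonneg

section
variable {M K : ℕ} {H : Matrix (Fin M) (Fin K) ℂ} {Ss : Matrix (Fin K) (Fin K) ℂ}
  {Sn : Matrix (Fin M) (Fin M) ℂ}

theorem mseMatrix_eq (G : Matrix (Fin M) (Fin K) ℂ) :
    mseMatrix H Ss Sn G =
      Ss - Ss * Hᴴ * G - Gᴴ * (H * Ss) + Gᴴ * (H * Ss * Hᴴ + Sn) * G := by
  simp only [mseMatrix, conjTranspose_sub, conjTranspose_mul, conjTranspose_one,
    conjTranspose_conjTranspose, Matrix.mul_sub, Matrix.sub_mul, Matrix.mul_add,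
    Matrix.add_mul, Matrix.mul_one, Matrix.one_mul, Matrix.mul_assoc]
  abel

theorem mseMatrix_eq_add_of_mul_eq (hSs : Ss.IsHermitian) (hSn : Sn.IsHermitian)
    {G₀ : Matrix (Fin M) (Fin K) ℂ} (hG₀ : (H * Ss * Hᴴ + Sn) * G₀ = H * Ss)
    (G : Matrix (Fin M) (Fin K) ℂ) :
    mseMatrix H Ss Sn G =
      mseMatrix H Ss Sn G₀ + (G - G₀)ᴴ * (H * Ss * Hᴴ + Sn) * (G - G₀) := by
  have hR : (H * Ss * Hᴴ + Sn).IsHermitian := (isHermitian_mul_mul_conjTranspose H hSs).add hSn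
  have hG₀' : Ss * Hᴴ = G₀ᴴ * (H * Ss * Hᴴ + Sn) := by
    simpa [hSs.eq, hR.eq] using (congrArg conjTranspose hG₀).symm
  rw [mseMatrix_eq, mseMatrix_eq]
  generalize H * Ss * Hᴴ + Sn = R at *
  rw [hG₀', ← hG₀]
  simp only [conjTranspose_sub, Matrix.mul_sub, Matrix.sub_mul, Matrix.mul_assoc]
  abel

end

/-- Generalized Wiener filter: for Hermitian positive definite Σ_s, Σ_n and
Hermitian positive definite weight W, the matrix G⋆ = (HΣ_sHᴴ + Σ_n)⁻¹HΣ_s globally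
minimizes G ↦ Re(Tr(W·E(G))) over all G ∈ ℂ^{M×K}. -/
theorem wiener_filter_optimal {M K : ℕ} (H : Matrix (Fin M) (Fin K) ℂ)
    (Ss : Matrix (Fin K) (Fin K) ℂ) (hSs : Ss.PosDef)
    (Sn : Matrix (Fin M) (Fin M) ℂ) (hSn : Sn.PosDef)
    (W : Matrix (Fin K) (Fin K) ℂ) (hW : W.PosDef) :
    ∀ G : Matrix (Fin M) (Fin K) ℂ,
      ((W * mseMatrix H Ss Sn ((H * Ss * Hᴴ + Sn)⁻¹ * H * Ss)).trace).re
        ≤ ((W * mseMatrix H Ss Sn G).trace).re := by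
  intro G
  set R := H * Ss * Hᴴ + Sn
  have hR : R.PosDef := PosDef.posSemidef_add (hSs.posSemidef.mul_mul_conjTranspose_same H) hSn
  have hG₀ : R * (R⁻¹ * H * Ss) = H * Ss := by
    rw [Matrix.mul_assoc _ H,
      mul_nonsing_inv_cancel_left _ _ ((isUnit_iff_isUnit_det R).mp hR.isUnit)]
  have hgap := hW.posSemidef.trace_mul_nonneg
    (hR.posSemidef.conjTranspose_mul_mul_same (G - R⁻¹ * H * Ss))
  rw [mseMatrix_eq_add_of_mul_eq hSs.isHermitian hSn.isHermitian hG₀ G, Matrix.mul_add,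
    trace_add, Complex.add_re]
  linarith [(Complex.nonneg_iff.mp hgap).1]
end

section
/- Let Q ∈ ℂ^{n×n} be Hermitian positive semidefinite, q ∈ ℂⁿ, and ρ > 0. Consider the convex trust-region subproblem: minimize g(x) = Re(xᴴQx) − 2Re(qᴴx) subject to ‖x‖₂ ≤ ρ. Suppose that either q is NOT orthogonal to the null space of Q, or q is orthogonal to the null space of Q but ‖Q†q‖₂ > ρ. Then there exists a unique μ⋆ > 0 such that ‖(Q + μ⋆I_n)⁻¹q‖₂ = ρ, and x⋆ = (Q + μ⋆I_n)⁻¹q is the unique global minimizer of the problem. -/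
/-!
Diagonalise `Q = ∑ λₖ bₖ bₖᴴ` in an orthonormal eigenbasis and put `pₖ = ⟪bₖ, q⟫`. For `μ > 0` the
coordinates of `(Q + μI)⁻¹q` are `pₖ / (λₖ + μ)`, so `‖(Q + μI)⁻¹q‖²` is the secular function
`φ(μ) = ∑ |pₖ|² / (λₖ + μ)²`, which is continuous and strictly decreasing on `(0, ∞)` and tends to `0`
at `∞`. If `q` is not orthogonal to `ker Q`, some `pₖ ≠ 0` has `λₖ = 0` and `φ(μ) → ∞` as `μ → 0⁺`.
Otherwise every such `pₖ` vanishes, `φ` is continuous at `0`, and `φ(0) = ‖Q†q‖² > ρ²`. Either way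
`φ` crosses `ρ²` exactly once, at `μ⋆`.

With `x⋆ = (Q + μ⋆I)⁻¹q`, completing the square in the `(Q + μ⋆I)`-form gives
`g(x) = g(x⋆) + (x - x⋆)ᴴQ(x - x⋆) + μ⋆‖x - x⋆‖² + μ⋆(‖x⋆‖² - ‖x‖²)`, and for `‖x‖ ≤ ρ = ‖x⋆‖` the last
three terms are at least `μ⋆‖x - x⋆‖²`: this is optimality and uniqueness at once.
-/

open Matrix ComplexOrder

/-- The Euclidean norm ‖x‖₂ = √(xᴴx) of a complex vector. -/
noncomputable def eucNorm {n : ℕ} (x : Fin n → ℂ) : ℝ :=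
  Real.sqrt ((star x ⬝ᵥ x).re)

open Set Filter Topology
open scoped InnerProductSpace

lemma re_star_dotProduct_self {ι : Type*} [Fintype ι] (x : ι → ℂ) :
    (star x ⬝ᵥ x).re = ‖WithLp.toLp 2 x‖ ^ 2 := by
  rw [← inner_self_eq_norm_sq (𝕜 := ℂ), EuclideanSpace.inner_toLp_toLp, dotProduct_comm]
  rfl

lemma eucNorm_eq_norm_toLp {n : ℕ} (x : Fin n → ℂ) : eucNorm x = ‖WithLp.toLp 2 x‖ := by
  rw [eucNorm, re_star_dotProduct_self, Real.sqrt_sq (norm_nonneg _)]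

section Secular

variable {ι : Type*} [Fintype ι]

noncomputable def secularFunction (w lam : ι → ℝ) (μ : ℝ) : ℝ :=
  ∑ k, w k / (lam k + μ) ^ 2

variable {w lam : ι → ℝ}

lemma ne_zero_of_secularFunction_ne_zero {μ : ℝ} (h : secularFunction w lam μ ≠ 0) : w ≠ 0 := by
  rintro rfl
  simp [secularFunction] at h

lemma secularFunction_strictAntiOn (hlam : ∀ k, 0 ≤ lam k) (hw : ∀ k, 0 ≤ w k) (hw₀ : w ≠ 0) :
    StrictAntiOn (secularFunction w lam) (Ioi 0) := by
  intro μ (hμ : 0 < μ) ν _ hμν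
  obtain ⟨k, hk⟩ := Function.ne_iff.mp hw₀
  have hk : 0 < w k := (hw k).lt_of_ne' hk
  refine Finset.sum_lt_sum (fun j _ => ?_) ⟨k, Finset.mem_univ _, ?_⟩
  · have := hlam j; have := hw j
    gcongr
  · have := hlam k
    gcongr

lemma secularFunction_continuousOn (hlam : ∀ k, 0 ≤ lam k) :
    ContinuousOn (secularFunction w lam) (Ioi 0) := by
  refine continuousOn_finsetSum _ fun k _ => continuousOn_const.div (by fun_prop) fun μ hμ => ?_
  have := hlam k; have : (0 : ℝ) < μ := hμ
  positivity

lemma tendsto_secularFunction_atTop : Tendsto (secularFunction w lam) atTop (𝓝 0) := by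
  rw [show (0 : ℝ) = ∑ _k : ι, 0 by simp]
  refine tendsto_finsetSum _ fun k _ => tendsto_const_nhds.div_atTop ?_
  exact (tendsto_pow_atTop two_ne_zero).comp (tendsto_atTop_add_const_left _ _ tendsto_id)

lemma tendsto_secularFunction_nhdsGT_zero (hw : ∀ k, 0 ≤ w k) {k : ι} (hlamk : lam k = 0)
    (hwk : w k ≠ 0) : Tendsto (secularFunction w lam) (𝓝[>] 0) atTop := by
  have hlim : Tendsto (fun μ : ℝ => w k * μ⁻¹ ^ 2) (𝓝[>] 0) atTop :=
    ((tendsto_pow_atTop two_ne_zero).comp tendsto_inv_nhdsGT_zero).const_mul_atTop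
      ((hw k).lt_of_ne' hwk)
  refine tendsto_atTop_mono (fun μ => ?_) hlim
  calc w k * μ⁻¹ ^ 2 = w k / (lam k + μ) ^ 2 := by rw [hlamk, zero_add, inv_pow, div_eq_mul_inv]
    _ ≤ secularFunction w lam μ :=
      Finset.single_le_sum (f := fun j => w j / (lam j + μ) ^ 2)
        (fun j _ => div_nonneg (hw j) (sq_nonneg _)) (Finset.mem_univ k)

lemma secularFunction_continuousAt_zero (hlam : ∀ k, 0 ≤ lam k)
    (hw : ∀ k, lam k = 0 → w k = 0) : ContinuousAt (secularFunction w lam) 0 := by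
  refine tendsto_finsetSum _ fun k _ => ?_
  rcases (hlam k).eq_or_lt' with hk | hk
  · simp only [hw k hk, zero_div]
    exact continuousAt_const
  · exact continuousAt_const.div (by fun_prop) (by positivity)

end Secular

lemma exists_unique_pos_eq_of_strictAntiOn {f : ℝ → ℝ} {c : ℝ} (hf : StrictAntiOn f (Ioi 0))
    (hcont : ContinuousOn f (Ioi 0)) (hlo : ∀ᶠ μ in 𝓝[>] 0, c < f μ)
    (hhi : ∀ᶠ μ in atTop, f μ < c) :
    ∃ μ, 0 < μ ∧ f μ = c ∧ ∀ ν, 0 < ν → f ν = c → ν = μ := by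
  obtain ⟨a, hca, ha⟩ := (hlo.and self_mem_nhdsWithin).exists
  obtain ⟨b, hbc, hab⟩ := (hhi.and (eventually_ge_atTop a)).exists
  obtain ⟨μ, hμ, hfμ⟩ := intermediate_value_Icc' hab
    (hcont.mono fun t ht => lt_of_lt_of_le ha ht.1) ⟨hbc.le, hca.le⟩
  have hμ : 0 < μ := lt_of_lt_of_le ha hμ.1
  exact ⟨μ, hμ, hfμ, fun ν hν hfν => hf.injOn hν hμ (hfν.trans hfμ.symm)⟩

lemma Matrix.PosSemidef.posDef_add_smul_one {ι : Type*} [DecidableEq ι] {Q : Matrix ι ι ℂ}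
    (hQ : Q.PosSemidef) {μ : ℝ} (hμ : 0 < μ) : (Q + (μ : ℂ) • 1).PosDef :=
  PosDef.posSemidef_add hQ (PosDef.one.smul (Complex.zero_lt_real.mpr hμ))

section Spectral

variable {ι : Type*} [Fintype ι] [DecidableEq ι] {A Q : Matrix ι ι ℂ}

noncomputable def Matrix.IsHermitian.spectralWeight (hA : A.IsHermitian) (q : ι → ℂ) (k : ι) :
    ℝ :=
  ‖⟪hA.eigenvectorBasis k, WithLp.toLp 2 q⟫_ℂ‖ ^ 2

lemma Matrix.IsHermitian.spectralWeight_nonneg (hA : A.IsHermitian) (q : ι → ℂ) (k : ι) :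
    0 ≤ hA.spectralWeight q k :=
  sq_nonneg _

lemma Matrix.IsHermitian.spectralWeight_eq_zero_iff (hA : A.IsHermitian) {q : ι → ℂ} {k : ι} :
    hA.spectralWeight q k = 0 ↔ ⟪hA.eigenvectorBasis k, WithLp.toLp 2 q⟫_ℂ = 0 := by
  rw [Matrix.IsHermitian.spectralWeight, sq_eq_zero_iff, norm_eq_zero]

lemma Matrix.IsHermitian.inner_eigenvectorBasis_toLp_mulVec (hA : A.IsHermitian) (x : ι → ℂ)
    (k : ι) :
    ⟪hA.eigenvectorBasis k, WithLp.toLp 2 (A *ᵥ x)⟫_ℂ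
      = hA.eigenvalues k * ⟪hA.eigenvectorBasis k, WithLp.toLp 2 x⟫_ℂ := by
  have hrow : star ⇑(hA.eigenvectorBasis k) ᵥ* A
      = (hA.eigenvalues k : ℂ) • star ⇑(hA.eigenvectorBasis k) := by
    rw [← congrArg (star ⇑(hA.eigenvectorBasis k) ᵥ* ·) hA.eq, ← star_mulVec,
      hA.mulVec_eigenvectorBasis, star_smul, star_trivial, RCLike.real_smul_eq_coe_smul (K := ℂ)]
    rfl
  simp only [EuclideanSpace.inner_eq_star_dotProduct, dotProduct_comm _ (star _),
    dotProduct_mulVec, hrow, smul_dotProduct, smul_eq_mul]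

lemma Matrix.PosSemidef.add_smul_one_mulVec_inv_mulVec (hQ : Q.PosSemidef) {μ : ℝ} (hμ : 0 < μ)
    (q : ι → ℂ) : (Q + (μ : ℂ) • 1) *ᵥ ((Q + (μ : ℂ) • 1)⁻¹ *ᵥ q) = q := by
  rw [mulVec_mulVec, mul_nonsing_inv _ ((hQ.posDef_add_smul_one hμ).isUnit.map detMonoidHom),
    one_mulVec]

lemma Matrix.PosSemidef.inner_eigenvectorBasis_toLp_inv_mulVec (hQ : Q.PosSemidef) {μ : ℝ}
    (hμ : 0 < μ) (q : ι → ℂ) (k : ι) :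
    ⟪hQ.isHermitian.eigenvectorBasis k, WithLp.toLp 2 ((Q + (μ : ℂ) • 1)⁻¹ *ᵥ q)⟫_ℂ
      = ⟪hQ.isHermitian.eigenvectorBasis k, WithLp.toLp 2 q⟫_ℂ
          / (hQ.isHermitian.eigenvalues k + μ : ℝ) := by
  have hpos : 0 < hQ.isHermitian.eigenvalues k + μ := by
    have := hQ.eigenvalues_nonneg k; linarith
  rw [eq_div_iff (Complex.ofReal_ne_zero.mpr hpos.ne'), mul_comm]
  conv_rhs => rw [← hQ.add_smul_one_mulVec_inv_mulVec hμ q]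
  rw [add_mulVec, smul_mulVec, one_mulVec, WithLp.toLp_add, WithLp.toLp_smul, inner_add_right,
    inner_smul_right, hQ.isHermitian.inner_eigenvectorBasis_toLp_mulVec]
  push_cast
  ring

lemma Matrix.PosSemidef.norm_toLp_inv_mulVec_sq (hQ : Q.PosSemidef) {μ : ℝ} (hμ : 0 < μ)
    (q : ι → ℂ) :
    ‖WithLp.toLp 2 ((Q + (μ : ℂ) • 1)⁻¹ *ᵥ q)‖ ^ 2
      = secularFunction (hQ.isHermitian.spectralWeight q) hQ.isHermitian.eigenvalues μ := by
  rw [← hQ.isHermitian.eigenvectorBasis.sum_sq_norm_inner_right, secularFunction]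
  refine Finset.sum_congr rfl fun k _ => ?_
  rw [hQ.inner_eigenvectorBasis_toLp_inv_mulVec hμ, norm_div, Complex.norm_real, div_pow,
    Real.norm_eq_abs, sq_abs, Matrix.IsHermitian.spectralWeight]

lemma Matrix.IsHermitian.exists_eigenvalues_eq_zero_spectralWeight_ne_zero (hA : A.IsHermitian)
    {q v : ι → ℂ} (hv : A *ᵥ v = 0) (hqv : star q ⬝ᵥ v ≠ 0) :
    ∃ k, hA.eigenvalues k = 0 ∧ hA.spectralWeight q k ≠ 0 := by
  set b := hA.eigenvectorBasis
  have hsum : ∑ k, ⟪WithLp.toLp 2 q, b k⟫_ℂ * ⟪b k, WithLp.toLp 2 v⟫_ℂ ≠ 0 := by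
    rwa [b.sum_inner_mul_inner, EuclideanSpace.inner_toLp_toLp, dotProduct_comm]
  obtain ⟨k, -, hk⟩ := Finset.exists_ne_zero_of_sum_ne_zero hsum
  obtain ⟨hqk, hvk⟩ := mul_ne_zero_iff.mp hk
  refine ⟨k, ?_, ?_⟩
  · have := hA.inner_eigenvectorBasis_toLp_mulVec v k
    rw [hv, WithLp.toLp_zero, inner_zero_right, eq_comm, mul_eq_zero] at this
    exact_mod_cast this.resolve_right hvk
  · rwa [Ne, hA.spectralWeight_eq_zero_iff, ← inner_conj_symm, map_eq_zero]

lemma Matrix.IsHermitian.spectralWeight_eq_zero_of_eigenvalues_eq_zero (hA : A.IsHermitian)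
    {q : ι → ℂ} (horth : ∀ v, A *ᵥ v = 0 → star q ⬝ᵥ v = 0) :
    ∀ k, hA.eigenvalues k = 0 → hA.spectralWeight q k = 0 := by
  intro k hk
  have hker : A *ᵥ ⇑(hA.eigenvectorBasis k) = 0 := by
    rw [hA.mulVec_eigenvectorBasis, hk, zero_smul]
  rw [hA.spectralWeight_eq_zero_iff, EuclideanSpace.inner_eq_star_dotProduct, dotProduct_comm,
    star_dotProduct, horth _ hker, star_zero]

lemma Matrix.IsHermitian.exists_mulVec_eq_norm_sq_eq_secularFunction_zero (hA : A.IsHermitian)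
    {q : ι → ℂ} (hq : ∀ k, hA.eigenvalues k = 0 → hA.spectralWeight q k = 0) :
    ∃ x, A *ᵥ x = q ∧ (∃ y, A *ᵥ y = x) ∧
      ‖WithLp.toLp 2 x‖ ^ 2 = secularFunction (hA.spectralWeight q) hA.eigenvalues 0 := by
  set b := hA.eigenvectorBasis
  set p : ι → ℂ := fun k => ⟪b k, WithLp.toLp 2 q⟫_ℂ
  let ofCoord (c : ι → ℂ) : ι → ℂ := (b.repr.symm (WithLp.toLp 2 c)).ofLp
  have inner_ofCoord (c : ι → ℂ) (k : ι) : ⟪b k, WithLp.toLp 2 (ofCoord c)⟫_ℂ = c k := by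
    simp [ofCoord, ← b.repr_apply_apply]
  have ext_coord {u v : ι → ℂ}
      (h : ∀ k, ⟪b k, WithLp.toLp 2 u⟫_ℂ = ⟪b k, WithLp.toLp 2 v⟫_ℂ) : u = v :=
    WithLp.toLp_injective 2 (InnerProductSpace.ext_inner_left_basis b.toBasis (by simpa using h))
  -- `x = Q†q` and `Q y = x` have coordinates `pₖ / λₖ` and `pₖ / λₖ²`, read with `z / 0 = 0`.
  refine ⟨ofCoord fun k => p k / (hA.eigenvalues k : ℂ), ext_coord fun k => ?_,
    ⟨ofCoord fun k => p k / (hA.eigenvalues k : ℂ) ^ 2, ext_coord fun k => ?_⟩, ?_⟩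
  · rw [hA.inner_eigenvectorBasis_toLp_mulVec, inner_ofCoord]
    by_cases hk : hA.eigenvalues k = 0
    · rw [hk, Complex.ofReal_zero, zero_mul]
      exact (hA.spectralWeight_eq_zero_iff.mp (hq k hk)).symm
    · exact mul_div_cancel₀ _ (Complex.ofReal_ne_zero.mpr hk)
  · rw [hA.inner_eigenvectorBasis_toLp_mulVec, inner_ofCoord, inner_ofCoord]
    by_cases hk : hA.eigenvalues k = 0
    · simp [hk]
    · have : (hA.eigenvalues k : ℂ) ≠ 0 := Complex.ofReal_ne_zero.mpr hk
      field_simp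
  · rw [← b.sum_sq_norm_inner_right, secularFunction]
    refine Finset.sum_congr rfl fun k _ => ?_
    rw [inner_ofCoord, norm_div, Complex.norm_real, div_pow, Real.norm_eq_abs, sq_abs, add_zero,
      Matrix.IsHermitian.spectralWeight]

lemma Matrix.PosSemidef.eventually_sq_lt_secularFunction (hQ : Q.PosSemidef) {q : ι → ℂ} {r : ℝ}
    (hr : 0 ≤ r)
    (hcase : (∃ v, Q *ᵥ v = 0 ∧ star q ⬝ᵥ v ≠ 0)
      ∨ ((∀ v, Q *ᵥ v = 0 → star q ⬝ᵥ v = 0)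
          ∧ ∀ x, Q *ᵥ x = q → (∃ y, Q *ᵥ y = x) → r < ‖WithLp.toLp 2 x‖)) :
    ∀ᶠ μ in 𝓝[>] 0,
      r ^ 2 < secularFunction (hQ.isHermitian.spectralWeight q) hQ.isHermitian.eigenvalues μ := by
  rcases hcase with ⟨v, hv, hqv⟩ | ⟨horth, hbig⟩
  · obtain ⟨k, hk, hwk⟩ :=
      hQ.isHermitian.exists_eigenvalues_eq_zero_spectralWeight_ne_zero hv hqv
    exact (tendsto_secularFunction_nhdsGT_zero (hQ.isHermitian.spectralWeight_nonneg q) hk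
      hwk).eventually_gt_atTop _
  · have hq := hQ.isHermitian.spectralWeight_eq_zero_of_eigenvalues_eq_zero horth
    obtain ⟨x, hx, hy, hxφ⟩ := hQ.isHermitian.exists_mulVec_eq_norm_sq_eq_secularFunction_zero hq
    have hφ0 := hxφ ▸ pow_lt_pow_left₀ (hbig x hx hy) hr two_ne_zero
    exact eventually_nhdsWithin_of_eventually_nhds
      ((secularFunction_continuousAt_zero hQ.eigenvalues_nonneg hq).eventually (lt_mem_nhds hφ0))

end Spectral

section Objective

variable {ι : Type*} [Fintype ι] {A Q : Matrix ι ι ℂ}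

def trObjective (Q : Matrix ι ι ℂ) (q x : ι → ℂ) : ℝ :=
  (star x ⬝ᵥ (Q *ᵥ x)).re - 2 * (star q ⬝ᵥ x).re

lemma Matrix.IsHermitian.trObjective_eq_of_mulVec_eq (hA : A.IsHermitian) {q xs : ι → ℂ}
    (hxs : A *ᵥ xs = q) (x : ι → ℂ) :
    trObjective A q x = (star (x - xs) ⬝ᵥ (A *ᵥ (x - xs))).re - (star xs ⬝ᵥ (A *ᵥ xs)).re := by
  have hswap : star xs ⬝ᵥ (A *ᵥ x) = star q ⬝ᵥ x := by
    rw [← hxs, dotProduct_mulVec, star_mulVec, hA.eq]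
  have hre : (star x ⬝ᵥ q).re = (star q ⬝ᵥ x).re := by
    rw [star_dotProduct, Complex.star_def, Complex.conj_re]
  simp only [trObjective, mulVec_sub, star_sub, sub_dotProduct, dotProduct_sub, Complex.sub_re,
    hxs, hswap]
  linarith

lemma trObjective_add_smul_one [DecidableEq ι] (Q : Matrix ι ι ℂ) (μ : ℝ) (q x : ι → ℂ) :
    trObjective (Q + (μ : ℂ) • 1) q x = trObjective Q q x + μ * ‖WithLp.toLp 2 x‖ ^ 2 := by
  simp only [trObjective, add_mulVec, smul_mulVec, one_mulVec, dotProduct_add, dotProduct_smul,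
    smul_eq_mul, Complex.add_re, Complex.re_ofReal_mul, re_star_dotProduct_self]
  ring

variable [DecidableEq ι] {μ : ℝ} {q xs x : ι → ℂ}

lemma Matrix.PosSemidef.trObjective_add_le (hQ : Q.PosSemidef) (hμ : 0 ≤ μ)
    (hxs : (Q + (μ : ℂ) • 1) *ᵥ xs = q) (hx : ‖WithLp.toLp 2 x‖ ≤ ‖WithLp.toLp 2 xs‖) :
    trObjective Q q xs + μ * ‖WithLp.toLp 2 (x - xs)‖ ^ 2 ≤ trObjective Q q x := by
  have hA : (Q + (μ : ℂ) • 1).IsHermitian :=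
    (hQ.add (PosSemidef.one.smul (Complex.zero_le_real.mpr hμ))).isHermitian
  have hx' := hA.trObjective_eq_of_mulVec_eq hxs x
  have hxs' := hA.trObjective_eq_of_mulVec_eq hxs xs
  rw [trObjective_add_smul_one] at hx' hxs'
  rw [sub_self, mulVec_zero, dotProduct_zero, Complex.zero_re] at hxs'
  have hquad : (star (x - xs) ⬝ᵥ ((Q + (μ : ℂ) • 1) *ᵥ (x - xs))).re
      = (star (x - xs) ⬝ᵥ (Q *ᵥ (x - xs))).re + μ * ‖WithLp.toLp 2 (x - xs)‖ ^ 2 := by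
    simp only [add_mulVec, smul_mulVec, one_mulVec, dotProduct_add, dotProduct_smul,
      smul_eq_mul, Complex.add_re, Complex.re_ofReal_mul, re_star_dotProduct_self]
  have hQd : 0 ≤ (star (x - xs) ⬝ᵥ (Q *ᵥ (x - xs))).re := hQ.re_dotProduct_nonneg _
  have hnorm : μ * ‖WithLp.toLp 2 x‖ ^ 2 ≤ μ * ‖WithLp.toLp 2 xs‖ ^ 2 := by gcongr
  linarith

lemma Matrix.PosSemidef.trObjective_le (hQ : Q.PosSemidef) (hμ : 0 ≤ μ)
    (hxs : (Q + (μ : ℂ) • 1) *ᵥ xs = q) (hx : ‖WithLp.toLp 2 x‖ ≤ ‖WithLp.toLp 2 xs‖) :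
    trObjective Q q xs ≤ trObjective Q q x :=
  le_of_add_le_of_nonneg_left (hQ.trObjective_add_le hμ hxs hx) (by positivity)

lemma Matrix.PosSemidef.eq_of_trObjective_eq (hQ : Q.PosSemidef) (hμ : 0 < μ)
    (hxs : (Q + (μ : ℂ) • 1) *ᵥ xs = q) (hx : ‖WithLp.toLp 2 x‖ ≤ ‖WithLp.toLp 2 xs‖)
    (heq : trObjective Q q x = trObjective Q q xs) : x = xs := by
  have hd : μ * ‖WithLp.toLp 2 (x - xs)‖ ^ 2 ≤ 0 := by
    linarith [hQ.trObjective_add_le hμ.le hxs hx]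
  have := le_antisymm (nonpos_of_mul_nonpos_right hd hμ) (sq_nonneg _)
  rwa [sq_eq_zero_iff, norm_eq_zero, ← WithLp.toLp_zero 2, (WithLp.toLp_injective 2).eq_iff,
    sub_eq_zero] at this

end Objective

/-- convex trust-region subproblem, active-constraint case:
let Q be Hermitian positive semidefinite and ρ > 0. Suppose either q is NOT orthogonal
to the null space of Q, or q is orthogonal to the null space of Q (hence Q†q, described
by Q x = q ∧ x ∈ range Q, exists) but ‖Q†q‖₂ > ρ. Then there is a unique μ⋆ > 0 with
‖(Q + μ⋆I)⁻¹q‖₂ = ρ, and x⋆ = (Q + μ⋆I)⁻¹q is the unique global minimizer of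
g(x) = Re(xᴴQx) − 2Re(qᴴx) over {x : ‖x‖₂ ≤ ρ}. -/
theorem cvx_trust_region_boundary {n : ℕ}
    (Q : Matrix (Fin n) (Fin n) ℂ) (hQ : Q.PosSemidef)
    (q : Fin n → ℂ) (ρ : ℝ) (hρ : 0 < ρ)
    (hcase : (∃ v : Fin n → ℂ, Q *ᵥ v = 0 ∧ star q ⬝ᵥ v ≠ 0)
      ∨ ((∀ v : Fin n → ℂ, Q *ᵥ v = 0 → star q ⬝ᵥ v = 0)
          ∧ ∀ x : Fin n → ℂ, Q *ᵥ x = q → (∃ y, Q *ᵥ y = x) → ρ < eucNorm x)) :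
    ∃ μs : ℝ, 0 < μs
      ∧ eucNorm ((Q + (μs : ℂ) • 1)⁻¹ *ᵥ q) = ρ
      ∧ (∀ μ : ℝ, 0 < μ → eucNorm ((Q + (μ : ℂ) • 1)⁻¹ *ᵥ q) = ρ → μ = μs)
      ∧ (∀ x : Fin n → ℂ, eucNorm x ≤ ρ →
          (star ((Q + (μs : ℂ) • 1)⁻¹ *ᵥ q) ⬝ᵥ (Q *ᵥ ((Q + (μs : ℂ) • 1)⁻¹ *ᵥ q))).re
              - 2 * (star q ⬝ᵥ ((Q + (μs : ℂ) • 1)⁻¹ *ᵥ q)).re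
            ≤ (star x ⬝ᵥ (Q *ᵥ x)).re - 2 * (star q ⬝ᵥ x).re)
      ∧ (∀ x : Fin n → ℂ, eucNorm x ≤ ρ →
          (star x ⬝ᵥ (Q *ᵥ x)).re - 2 * (star q ⬝ᵥ x).re
            = (star ((Q + (μs : ℂ) • 1)⁻¹ *ᵥ q) ⬝ᵥ (Q *ᵥ ((Q + (μs : ℂ) • 1)⁻¹ *ᵥ q))).re
              - 2 * (star q ⬝ᵥ ((Q + (μs : ℂ) • 1)⁻¹ *ᵥ q)).re →
          x = (Q + (μs : ℂ) • 1)⁻¹ *ᵥ q) := by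
  set φ := secularFunction (hQ.isHermitian.spectralWeight q) hQ.isHermitian.eigenvalues
  have hnorm (μ : ℝ) (hμ : 0 < μ) : eucNorm ((Q + (μ : ℂ) • 1)⁻¹ *ᵥ q) = ρ ↔ φ μ = ρ ^ 2 := by
    rw [eucNorm_eq_norm_toLp, ← pow_left_inj₀ (norm_nonneg _) hρ.le two_ne_zero,
      hQ.norm_toLp_inv_mulVec_sq hμ]
  have hlo : ∀ᶠ μ in 𝓝[>] 0, ρ ^ 2 < φ μ :=
    hQ.eventually_sq_lt_secularFunction hρ.le (by simpa only [eucNorm_eq_norm_toLp] using hcase)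
  obtain ⟨μ₀, hμ₀⟩ := hlo.exists
  obtain ⟨μs, hμs, hφμs, huniq⟩ := exists_unique_pos_eq_of_strictAntiOn
    (secularFunction_strictAntiOn hQ.eigenvalues_nonneg (hQ.isHermitian.spectralWeight_nonneg q)
      (ne_zero_of_secularFunction_ne_zero ((sq_nonneg ρ).trans_lt hμ₀).ne'))
    (secularFunction_continuousOn hQ.eigenvalues_nonneg) hlo
    (tendsto_secularFunction_atTop.eventually (gt_mem_nhds (pow_pos hρ 2)))
  have hxs : eucNorm ((Q + (μs : ℂ) • 1)⁻¹ *ᵥ q) = ρ := (hnorm μs hμs).2 hφμs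
  have hfeas (x : Fin n → ℂ) (hx : eucNorm x ≤ ρ) :
      ‖WithLp.toLp 2 x‖ ≤ ‖WithLp.toLp 2 ((Q + (μs : ℂ) • 1)⁻¹ *ᵥ q)‖ := by
    rwa [← eucNorm_eq_norm_toLp, ← eucNorm_eq_norm_toLp, hxs]
  have hsol := hQ.add_smul_one_mulVec_inv_mulVec hμs q
  exact ⟨μs, hμs, hxs, fun μ hμ h => huniq μ hμ ((hnorm μ hμ).1 h),
    fun x hx => hQ.trObjective_le hμs.le hsol (hfeas x hx),
    fun x hx heq => hQ.eq_of_trObjective_eq hμs hsol (hfeas x hx) heq⟩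
end

section
/- Let g ∈ ℂ^M, H ∈ ℂ^{M×N} with Hᴴg ≠ 0, q̃ ∈ ℂ^M, and real numbers σ_s² > 0, σ_i² > 0, P̄ > 0. Consider the scalar-source precoder subproblem: minimize φ(f) = (σ_s² + σ_i²)·Re(fᴴ(Hᴴg gᴴH)f) − 2σ_s²·Re((1 − q̃ᴴg)·gᴴHf) over f ∈ ℂ^N subject to ‖f‖₂² ≤ P̄. Suppose σ_s⁴·|1 − gᴴq̃|² ≤ (σ_s² + σ_i²)²·P̄·‖Hᴴg‖₂². Then f⋆ = σ_s²·(1 − gᴴq̃)·Hᴴg / ((σ_s² + σ_i²)·gᴴHHᴴg) is a global minimizer of the problem, and it is feasible: ‖f⋆‖₂² ≤ P̄. -/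
/-!
The objective depends on `f` only through `z = uᴴf`, where `u = Hᴴg`: with `d = σ_s² + σ_i²` and
`w = σ_s² (1 - q̃ᴴg)` it equals `d |z|² - 2 Re(w z) = (|d z - w̄|² - |w|²) / d`. Its unconstrained
minimum is therefore attained wherever `uᴴf = w̄ / d`, in particular at `f⋆`, and the case hypothesis
says exactly that `‖f⋆‖₂² = σ_s⁴ |1 - gᴴq̃|² / (d² ‖u‖₂²)` is within the budget.
-/

open Matrix ComplexOrder

open ComplexConjugate

lemma star_dotProduct_self_eq_eucNorm_sq {n : ℕ} (x : Fin n → ℂ) :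
    star x ⬝ᵥ x = ((eucNorm x ^ 2 : ℝ) : ℂ) := by
  obtain ⟨hre, him⟩ := Complex.le_def.mp (dotProduct_star_self_nonneg x)
  rw [eucNorm, Real.sq_sqrt hre]
  exact Complex.ext rfl (by simpa using him.symm)

lemma eucNorm_smul_sq {n : ℕ} (a : ℂ) (x : Fin n → ℂ) :
    eucNorm (a • x) ^ 2 = ‖a‖ ^ 2 * eucNorm x ^ 2 := by
  have h := star_dotProduct_self_eq_eucNorm_sq (a • x)
  rw [star_smul, smul_dotProduct, dotProduct_smul, star_dotProduct_self_eq_eucNorm_sq,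
    smul_eq_mul, smul_eq_mul, ← mul_assoc, Complex.star_def, Complex.conj_mul'] at h
  exact_mod_cast h.symm

lemma star_dotProduct_vecMulVec_star_mulVec {ι : Type*} [Fintype ι] (u f : ι → ℂ) :
    star f ⬝ᵥ (vecMulVec u (star u) *ᵥ f) = Complex.normSq (star u ⬝ᵥ f) := by
  rw [vecMulVec_mulVec, op_smul_eq_smul, dotProduct_smul, smul_eq_mul, star_dotProduct f u,
    Complex.normSq_eq_conj_mul_self, Complex.star_def, mul_comm]

lemma Complex.normSq_mul_sub_two_re_mul_le {d : ℝ} (hd : 0 < d) (w z : ℂ) :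
    d * normSq (conj w / d) - 2 * (w * (conj w / d)).re ≤ d * normSq z - 2 * (w * z).re := by
  have hsquare : ∀ y : ℂ,
      d * normSq y - 2 * (w * y).re = normSq (d * y - conj w) / d - normSq w / d := by
    intro y
    simp only [normSq_apply, mul_re, mul_im, sub_re, sub_im, ofReal_re, ofReal_im, conj_re,
      conj_im]
    field_simp
    ring
  rw [hsquare, hsquare, mul_div_cancel₀ _ (ofReal_ne_zero.mpr hd.ne'), sub_self, map_zero,
    zero_div]
  gcongr
  exact div_nonneg (normSq_nonneg _) hd.le

theorem scalar_precoder_zero_multiplier_general {M N : ℕ}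
    (g : Fin M → ℂ) (H : Matrix (Fin M) (Fin N) ℂ) (hHg : Hᴴ *ᵥ g ≠ 0)
    (qt : Fin M → ℂ) (σs2 σi2 Pb : ℝ)
    (hσs : 0 < σs2) (hσi : 0 < σi2)
    (hcase : σs2 ^ 2 * ‖1 - star g ⬝ᵥ qt‖ ^ 2
      ≤ (σs2 + σi2) ^ 2 * Pb * (eucNorm (Hᴴ *ᵥ g)) ^ 2) :
    let u : Fin N → ℂ := Hᴴ *ᵥ g
    let A : Matrix (Fin N) (Fin N) ℂ := vecMulVec u (star u)
    let φ : (Fin N → ℂ) → ℝ := fun f =>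
      (σs2 + σi2) * (star f ⬝ᵥ (A *ᵥ f)).re
        - 2 * σs2 * ((1 - star qt ⬝ᵥ g) * (star u ⬝ᵥ f)).re
    let fs : Fin N → ℂ :=
      (((σs2 : ℂ) * (1 - star g ⬝ᵥ qt)) / (((σs2 + σi2 : ℝ) : ℂ) * (star u ⬝ᵥ u))) • u
    (eucNorm fs) ^ 2 ≤ Pb ∧
      ∀ f : Fin N → ℂ, (eucNorm f) ^ 2 ≤ Pb → φ fs ≤ φ f := by
  intro u A φ fs
  have hd : 0 < σs2 + σi2 := by positivity
  have hu : star u ⬝ᵥ u = ((eucNorm u ^ 2 : ℝ) : ℂ) := star_dotProduct_self_eq_eucNorm_sq u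
  have hs : 0 < eucNorm u ^ 2 := by
    have := dotProduct_star_self_pos_iff.mpr hHg
    rwa [hu, Complex.zero_lt_real] at this
  set w : ℂ := σs2 * (1 - star qt ⬝ᵥ g)
  have hconj : (σs2 : ℂ) * (1 - star g ⬝ᵥ qt) = conj w := by
    simp [w, star_dotProduct g qt]
  have hfs : star u ⬝ᵥ fs = conj w / (σs2 + σi2 : ℝ) := by
    have : ((eucNorm u ^ 2 : ℝ) : ℂ) ≠ 0 := Complex.ofReal_ne_zero.mpr hs.ne'
    simp only [fs, dotProduct_smul, smul_eq_mul, hconj, hu]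
    field_simp
  have hφ : ∀ f,
      φ f = (σs2 + σi2) * Complex.normSq (star u ⬝ᵥ f) - 2 * (w * (star u ⬝ᵥ f)).re := by
    intro f
    simp only [φ, A, star_dotProduct_vecMulVec_star_mulVec, Complex.ofReal_re, w, mul_assoc,
      Complex.re_ofReal_mul]
  refine ⟨?_, fun f _ => ?_⟩
  · have hnorm : eucNorm fs ^ 2
        = σs2 ^ 2 * ‖1 - star g ⬝ᵥ qt‖ ^ 2 / ((σs2 + σi2) ^ 2 * eucNorm u ^ 2) := by
      simp only [fs, eucNorm_smul_sq, hu, norm_div, norm_mul, Complex.norm_real, Real.norm_eq_abs,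
        abs_of_pos hσs, abs_of_pos hd, abs_of_pos hs]
      field_simp
    rw [hnorm, div_le_iff₀ (by positivity)]
    linarith
  · rw [hφ, hφ, hfs]
    exact Complex.normSq_mul_sub_two_re_mul_le hd w _

/-- scalar-source precoder, zero multiplier case: minimize
φ(f) = (σ_s²+σ_i²)Re(fᴴ(Hᴴg gᴴH)f) − 2σ_s²Re((1 − q̃ᴴg)gᴴHf) over ‖f‖₂² ≤ P̄.
If σ_s⁴|1 − gᴴq̃|² ≤ (σ_s²+σ_i²)²P̄‖Hᴴg‖₂², then
f⋆ = σ_s²(1 − gᴴq̃)Hᴴg / ((σ_s²+σ_i²)gᴴHHᴴg) is a feasible global minimizer: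
‖f⋆‖₂² ≤ P̄. -/
theorem scalar_precoder_zero_multiplier {M N : ℕ}
    (g : Fin M → ℂ) (H : Matrix (Fin M) (Fin N) ℂ) (hHg : Hᴴ *ᵥ g ≠ 0)
    (qt : Fin M → ℂ) (σs2 σi2 Pb : ℝ)
    (hσs : 0 < σs2) (hσi : 0 < σi2) (hPb : 0 < Pb)
    (hcase : σs2 ^ 2 * ‖1 - star g ⬝ᵥ qt‖ ^ 2
      ≤ (σs2 + σi2) ^ 2 * Pb * (eucNorm (Hᴴ *ᵥ g)) ^ 2) :
    let u : Fin N → ℂ := Hᴴ *ᵥ g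
    let A : Matrix (Fin N) (Fin N) ℂ := vecMulVec u (star u)
    let φ : (Fin N → ℂ) → ℝ := fun f =>
      (σs2 + σi2) * (star f ⬝ᵥ (A *ᵥ f)).re
        - 2 * σs2 * ((1 - star qt ⬝ᵥ g) * (star u ⬝ᵥ f)).re
    let fs : Fin N → ℂ :=
      (((σs2 : ℂ) * (1 - star g ⬝ᵥ qt)) / (((σs2 + σi2 : ℝ) : ℂ) * (star u ⬝ᵥ u))) • u
    (eucNorm fs) ^ 2 ≤ Pb ∧
      ∀ f : Fin N → ℂ, (eucNorm f) ^ 2 ≤ Pb → φ fs ≤ φ f :=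
  scalar_precoder_zero_multiplier_general g H hHg qt σs2 σi2 Pb hσs hσi hcase
end

section
/- Let H̄ ∈ ℂ^{M×K}, let Σ_s ∈ ℂ^{K×K} be Hermitian positive definite, and let Σ_n ∈ ℂ^{M×M} be Hermitian positive definite. Define Ḡ = (H̄Σ_sH̄ᴴ + Σ_n)⁻¹H̄Σ_s and W̄ = H̄ᴴΣ_n⁻¹H̄ + Σ_s⁻¹. Then Ḡ·W̄·(I_K − ḠᴴH̄) = (H̄Σ_sH̄ᴴ + Σ_n)⁻¹·H̄. -/
open Matrix ComplexOrder

set_option maxHeartbeats 1000000 in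
/-- with Σ_s, Σ_n Hermitian positive definite,
Ḡ = (H̄Σ_sH̄ᴴ + Σ_n)⁻¹H̄Σ_s and W̄ = H̄ᴴΣ_n⁻¹H̄ + Σ_s⁻¹ satisfy
Ḡ W̄ (I − Ḡᴴ H̄) = (H̄Σ_sH̄ᴴ + Σ_n)⁻¹ H̄. -/
theorem kkt_identity_first {M K : ℕ} (H : Matrix (Fin M) (Fin K) ℂ)
    (Ss : Matrix (Fin K) (Fin K) ℂ) (hSs : Ss.PosDef)
    (Sn : Matrix (Fin M) (Fin M) ℂ) (hSn : Sn.PosDef) :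
    ((H * Ss * Hᴴ + Sn)⁻¹ * H * Ss) * (Hᴴ * Sn⁻¹ * H + Ss⁻¹)
        * (1 - ((H * Ss * Hᴴ + Sn)⁻¹ * H * Ss)ᴴ * H)
      = (H * Ss * Hᴴ + Sn)⁻¹ * H := by
  set A := H * Ss * Hᴴ + Sn with hAdef
  have hA : A.PosDef := by
    have hs : (H * Ss * Hᴴ).PosSemidef := by
      simpa [Matrix.mul_assoc] using hSs.posSemidef.mul_mul_conjTranspose_same H
    exact Matrix.PosDef.posSemidef_add hs hSn
  have hAH : Aᴴ = A := hA.isHermitian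
  have hAinvH : (A⁻¹)ᴴ = A⁻¹ := by
    rw [Matrix.conjTranspose_nonsing_inv, hAH]
  have hSsH : Ssᴴ = Ss := hSs.isHermitian
  have hSnIH : (Sn⁻¹)ᴴ = Sn⁻¹ := by
    rw [Matrix.conjTranspose_nonsing_inv, hSn.isHermitian.eq]
  have hAi : A⁻¹ * A = 1 := Matrix.nonsing_inv_mul A (hA.isUnit.map (detMonoidHom))
  have hAi' : A * A⁻¹ = 1 := Matrix.mul_nonsing_inv A (hA.isUnit.map (detMonoidHom))
  have hSsi : Ss⁻¹ * Ss = 1 := Matrix.nonsing_inv_mul Ss (hSs.isUnit.map (detMonoidHom))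
  have hSsi' : Ss * Ss⁻¹ = 1 := Matrix.mul_nonsing_inv Ss (hSs.isUnit.map (detMonoidHom))
  have hSni' : Sn⁻¹ * Sn = 1 := Matrix.nonsing_inv_mul Sn (hSn.isUnit.map (detMonoidHom))
  -- conjTranspose of G times H
  have hGH : (A⁻¹ * H * Ss)ᴴ * H
      = Ss * Hᴴ * A⁻¹ * H := by
    simp [Matrix.conjTranspose_mul, hAinvH, hSsH, Matrix.mul_assoc]
  rw [hGH]
  -- key Woodbury-type identity
  have hkey : (Hᴴ * Sn⁻¹ * H + Ss⁻¹) * ((1 - Ss * Hᴴ * A⁻¹ * H) * Ss) = 1 := by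
    have expand : (Hᴴ * Sn⁻¹ * H + Ss⁻¹) * ((1 - Ss * Hᴴ * A⁻¹ * H) * Ss)
        = Ss⁻¹ * Ss + Hᴴ * Sn⁻¹ * ((1 - (H * Ss * Hᴴ + Sn) * A⁻¹) * (H * Ss))
          + (1 - Ss⁻¹ * Ss) * (Hᴴ * (A⁻¹ * (H * Ss))) := by
      simp only [Matrix.mul_sub, Matrix.sub_mul, Matrix.mul_add, Matrix.add_mul,
        Matrix.mul_one, Matrix.one_mul]
      have hsn : Hᴴ * Sn⁻¹ * Sn = Hᴴ := by
        rw [Matrix.mul_assoc, hSni', Matrix.mul_one]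
      simp only [Matrix.mul_assoc]
      rw [← Matrix.mul_assoc Sn⁻¹ Sn, hSni', Matrix.one_mul]
      abel
    rw [expand, hAi', hSsi]
    simp
  have h2 : (Hᴴ * Sn⁻¹ * H + Ss⁻¹) * (1 - Ss * Hᴴ * A⁻¹ * H) = Ss⁻¹ := by
    calc (Hᴴ * Sn⁻¹ * H + Ss⁻¹) * (1 - Ss * Hᴴ * A⁻¹ * H)
        = (Hᴴ * Sn⁻¹ * H + Ss⁻¹) * ((1 - Ss * Hᴴ * A⁻¹ * H) * Ss) * Ss⁻¹ := by
          conv_rhs => rw [Matrix.mul_assoc, Matrix.mul_assoc (1 - Ss * Hᴴ * A⁻¹ * H) Ss Ss⁻¹, hSsi', Matrix.mul_one]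
      _ = Ss⁻¹ := by rw [hkey, Matrix.one_mul]
  calc A⁻¹ * H * Ss * (Hᴴ * Sn⁻¹ * H + Ss⁻¹) * (1 - Ss * Hᴴ * A⁻¹ * H)
      = A⁻¹ * H * (Ss * ((Hᴴ * Sn⁻¹ * H + Ss⁻¹) * (1 - Ss * Hᴴ * A⁻¹ * H))) := by
        simp only [Matrix.mul_assoc]
    _ = A⁻¹ * H := by rw [h2, hSsi', Matrix.mul_one]
end

section
/- Let H̄ ∈ ℂ^{M×K}, let Σ_s ∈ ℂ^{K×K} be Hermitian positive definite, and let Σ_n ∈ ℂ^{M×M} be Hermitian positive definite. Define Ḡ = (H̄Σ_sH̄ᴴ + Σ_n)⁻¹H̄Σ_s and W̄ = H̄ᴴΣ_n⁻¹H̄ + Σ_s⁻¹. Then Ḡ·W̄·Ḡᴴ = (H̄Σ_sH̄ᴴ + Σ_n)⁻¹·H̄Σ_sH̄ᴴ·Σ_n⁻¹. -/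
open Matrix ComplexOrder

/-- with Σ_s, Σ_n Hermitian positive definite,
Ḡ = (H̄Σ_sH̄ᴴ + Σ_n)⁻¹H̄Σ_s and W̄ = H̄ᴴΣ_n⁻¹H̄ + Σ_s⁻¹ satisfy
Ḡ W̄ Ḡᴴ = (H̄Σ_sH̄ᴴ + Σ_n)⁻¹ H̄Σ_sH̄ᴴ Σ_n⁻¹. -/
theorem kkt_identity_second {M K : ℕ} (H : Matrix (Fin M) (Fin K) ℂ)
    (Ss : Matrix (Fin K) (Fin K) ℂ) (hSs : Ss.PosDef)
    (Sn : Matrix (Fin M) (Fin M) ℂ) (hSn : Sn.PosDef) :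
    ((H * Ss * Hᴴ + Sn)⁻¹ * H * Ss) * (Hᴴ * Sn⁻¹ * H + Ss⁻¹)
        * ((H * Ss * Hᴴ + Sn)⁻¹ * H * Ss)ᴴ
      = (H * Ss * Hᴴ + Sn)⁻¹ * (H * Ss * Hᴴ) * Sn⁻¹ := by
  have hA : (H * Ss * Hᴴ + Sn).PosDef :=
    Matrix.PosDef.posSemidef_add (hSs.posSemidef.mul_mul_conjTranspose_same H) hSn
  have hAu : IsUnit (H * Ss * Hᴴ + Sn).det := hA.det_pos.ne'.isUnit
  have hSsu : IsUnit Ss.det := hSs.det_pos.ne'.isUnit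
  have hSnu : IsUnit Sn.det := hSn.det_pos.ne'.isUnit
  have hAH : ((H * Ss * Hᴴ + Sn)⁻¹)ᴴ = (H * Ss * Hᴴ + Sn)⁻¹ := hA.isHermitian.inv.eq
  have hexp : ((H * Ss * Hᴴ + Sn)⁻¹ * H * Ss)ᴴ = Ss * Hᴴ * (H * Ss * Hᴴ + Sn)⁻¹ := by
    rw [Matrix.conjTranspose_mul, Matrix.conjTranspose_mul, hAH, hSs.isHermitian.eq,
      Matrix.mul_assoc]
    simp only [Matrix.mul_assoc]
  rw [hexp]
  have key : H * Ss * (Hᴴ * Sn⁻¹ * H + Ss⁻¹) * (Ss * Hᴴ)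
      = (H * Ss * Hᴴ) * Sn⁻¹ * (H * Ss * Hᴴ + Sn) := by
    rw [Matrix.mul_add, Matrix.add_mul, Matrix.mul_add,
      Matrix.nonsing_inv_mul_cancel_right _ _ hSnu]
    have h1 : H * Ss * Ss⁻¹ * (Ss * Hᴴ) = H * Ss * Hᴴ := by
      rw [Matrix.mul_assoc (H * Ss), Matrix.nonsing_inv_mul_cancel_left _ _ hSsu]
    rw [h1]
    congr 1
    simp only [Matrix.mul_assoc]
  calc (H * Ss * Hᴴ + Sn)⁻¹ * H * Ss * (Hᴴ * Sn⁻¹ * H + Ss⁻¹)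
        * (Ss * Hᴴ * (H * Ss * Hᴴ + Sn)⁻¹)
      = (H * Ss * Hᴴ + Sn)⁻¹ * (H * Ss * (Hᴴ * Sn⁻¹ * H + Ss⁻¹) * (Ss * Hᴴ))
          * (H * Ss * Hᴴ + Sn)⁻¹ := by simp only [Matrix.mul_assoc]
    _ = (H * Ss * Hᴴ + Sn)⁻¹ * ((H * Ss * Hᴴ) * Sn⁻¹ * (H * Ss * Hᴴ + Sn))
          * (H * Ss * Hᴴ + Sn)⁻¹ := by rw [key]
    _ = (H * Ss * Hᴴ + Sn)⁻¹ * (H * Ss * Hᴴ) * Sn⁻¹ := by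
        rw [Matrix.mul_assoc _ _ ((H * Ss * Hᴴ + Sn)⁻¹),
          Matrix.mul_nonsing_inv_cancel_right _ _ hAu, ← Matrix.mul_assoc]
end
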